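/- arXiv:1910.11921 — 2 statements merged into one kernel-verified Lean document; each statement's English description precedes it below -/
import Mathlib

section
/- If every vector of Q ⊆ F_2^n is within Hamming distance less than t of some vector in an r-dimensional subspace U ⊆ F_2^n, then there is a systematic linear data structure for the inner product problem on Q with redundancy r and query time less than t. Concretely: there exist vectors b_1, ..., b_r ∈ F_2^n such that for every q ∈ Q there is a set S_q of fewer than t coordinates and coefficients so that for all v ∈ F_2^n, ⟨q, v⟩ equals a fixed F_2-linear combination of ⟨b_1, v⟩, ..., ⟨b_r, v⟩ and the bits v[i] for i ∈ S_q. -/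
/-!
Store the inner products of `v` with a basis `b_1, …, b_r` of `U`. For `q ∈ Q` pick `u ∈ U`
at Hamming distance `< t`; then `⟨q, v⟩ = ⟨u, v⟩ + ⟨q - u, v⟩`, where `⟨u, v⟩` is the
combination of the stored `⟨b_j, v⟩` with the coordinates of `u` in the basis, and
`⟨q - u, v⟩` only reads `v` on the fewer than `t` coordinates where `q` and `u` differ.
-/

namespace Matrix

theorem dotProduct_eq_sum_repr_mul {R m ι : Type*} [CommRing R] [Fintype m] [Fintype ι]
    {U : Submodule R (m → R)} (B : Module.Basis ι R U) (u : U) (v : m → R) :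
    (u : m → R) ⬝ᵥ v = ∑ j, B.repr u j * ((B j : m → R) ⬝ᵥ v) := by
  conv_lhs => rw [← B.sum_repr u]
  simp only [Submodule.coe_sum, Submodule.coe_smul, sum_dotProduct, smul_dotProduct, smul_eq_mul]

theorem dotProduct_eq_add_sum_filter_ne {R m : Type*} [CommRing R] [Fintype m] [DecidableEq R]
    (q u v : m → R) :
    q ⬝ᵥ v = u ⬝ᵥ v + ∑ i with q i ≠ u i, (q i - u i) * v i := by
  have hsupp : ∑ i with q i ≠ u i, (q i - u i) * v i = (q - u) ⬝ᵥ v := by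
    rw [Finset.sum_filter_of_ne fun i _ h => by simpa [sub_eq_zero] using left_ne_zero_of_mul h]
    rfl
  rw [hsupp, sub_dotProduct, add_sub_cancel]

end Matrix

open Matrix in
/-- If every `q ∈ Q` is within Hamming distance `< t` of an `r`-dimensional
subspace `U`, then there is a systematic linear data structure with redundancy
`r` and query time `< t`: there are `b_1, …, b_r` such that every `⟨q, v⟩` is a
fixed `F_2`-linear combination of `⟨b_1,v⟩, …, ⟨b_r,v⟩` and fewer than `t`
coordinates of `v`. -/
theorem stmt_6 {n r t : ℕ} (Q : Set (Fin n → ZMod 2))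
    (U : Submodule (ZMod 2) (Fin n → ZMod 2))
    (hU : Module.finrank (ZMod 2) ↥U = r)
    (hclose : ∀ q ∈ Q, ∃ u ∈ U, hammingDist q u < t) :
    ∃ b : Fin r → (Fin n → ZMod 2),
      ∀ q ∈ Q, ∃ S : Finset (Fin n), S.card < t ∧
        ∃ c : Fin r → ZMod 2, ∃ d : Fin n → ZMod 2,
          ∀ v : Fin n → ZMod 2,
            q ⬝ᵥ v = (∑ j : Fin r, c j * (b j ⬝ᵥ v)) + ∑ i ∈ S, d i * v i := by
  let B := Module.finBasisOfFinrankEq (ZMod 2) U hU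
  refine ⟨fun j => B j, fun q hq => ?_⟩
  obtain ⟨u, huU, hdist⟩ := hclose q hq
  refine ⟨({i | q i ≠ u i} : Finset (Fin n)), hdist, B.repr ⟨u, huU⟩, q - u, fun v => ?_⟩
  rw [dotProduct_eq_add_sum_filter_ne q u v, dotProduct_eq_sum_repr_mul B ⟨u, huU⟩ v]
  rfl
end

section
/- For a uniformly random M ∈ F_2^{√n × √n} and 1 ≤ k ≤ √n, E_M[ |E_{u,v}[(-1)^{uᵀMv}]|^k ] ≤ 2 · 2^{-9k√n/20}. -/
/-!
Over `𝔽₂`, the character sum `∑_u (-1)^{u ⬝ w}` vanishes unless `w = 0`, so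
`E_{u,v}[(-1)^{uᵀMv}] = Pr_v[Mv = 0] = 2^{-rank M}`, and the claim is a bound on the moment
`E_M[2^{-k·rank M}]`. By the power mean inequality with exponent `m / k ≥ 1` it suffices to bound
`E_M[2^{-m·rank M}]`. A matrix of rank `r` factors as `A * B` through `𝔽₂^r`, so there are at most
`min(2^{m²}, 2^{2rm})` of them, and the rank-`r` contribution to `E_M[2^{-m·rank M}]` is at most
`2^{m·min(r, m-r) - m²}`. These terms decay geometrically away from `r = m/2`, which gives
`E_M[2^{-m·rank M}] ≤ 2·2^{-m²/2}`, hence `E_M[2^{-k·rank M}] ≤ 2^{k/m}·2^{-km/2} ≤ 2·2^{-9km/20}`.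
-/

open Matrix Finset

namespace Matrix

variable {K m n : Type*} [Fintype n] [DecidableEq n]

theorem card_eq [Fintype K] [Fintype m] [DecidableEq m] :
    Fintype.card (Matrix m n K) = Fintype.card K ^ (Fintype.card m * Fintype.card n) := by
  change Fintype.card (m → n → K) = _
  rw [Fintype.card_fun, Fintype.card_fun, ← pow_mul, mul_comm]

variable [Field K]

theorem exists_rank_factorization (M : Matrix m n K) :
    ∃ (A : Matrix m (Fin M.rank) K) (B : Matrix (Fin M.rank) n K), A * B = M := by
  let W := LinearMap.range M.mulVecLin
  let b : Module.Basis (Fin M.rank) K W := Module.finBasisOfFinrankEq K W rfl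
  refine ⟨LinearMap.toMatrix' (W.subtype ∘ₗ b.equivFun.symm.toLinearMap),
    LinearMap.toMatrix' (b.equivFun.toLinearMap ∘ₗ M.mulVecLin.rangeRestrict), ?_⟩
  rw [← LinearMap.toMatrix'_comp]
  convert LinearMap.toMatrix'_toLin' M using 2
  ext v
  simp [W]

theorem card_filter_rank_eq_le [Fintype K] [Fintype m] [DecidableEq m] (r : ℕ) :
    #{M : Matrix m n K | M.rank = r} ≤
      Fintype.card K ^ (r * (Fintype.card m + Fintype.card n)) := by
  refine (card_le_card_of_surjOn (s := univ)
    (fun p : Matrix m (Fin r) K × Matrix (Fin r) n K => p.1 * p.2) ?_).trans_eq ?_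
  · rintro M hM
    simp only [coe_filter, mem_univ, true_and] at hM
    obtain ⟨A, B, hAB⟩ := M.exists_rank_factorization
    rw [show r = M.rank from hM.symm]
    exact ⟨(A, B), by simp, hAB⟩
  · rw [card_univ, Fintype.card_prod, card_eq, card_eq, Fintype.card_fin]
    ring

theorem card_filter_mulVec_eq_zero [Fintype K] [DecidableEq K] [Fintype m] (M : Matrix m n K) :
    #{v | M *ᵥ v = 0} = Fintype.card K ^ (Fintype.card n - M.rank) := by
  have hker : #{v | M *ᵥ v = 0} = Nat.card (LinearMap.ker M.mulVecLin) := by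
    rw [← Fintype.card_subtype, ← Nat.card_eq_fintype_card]; rfl
  rw [hker, Module.natCard_eq_pow_finrank (K := K), Nat.card_eq_fintype_card]
  have := LinearMap.finrank_range_add_finrank_ker M.mulVecLin
  rw [Module.finrank_fintype_fun_eq_card] at this
  congr 1
  change _ = _ - Module.finrank K (LinearMap.range M.mulVecLin)
  omega

end Matrix

section SignSums

variable {m n : Type*} [Fintype m] [Fintype n] [DecidableEq m] [DecidableEq n]

theorem ite_add_one_eq_zero_neg (x : ZMod 2) :
    (if x + 1 = 0 then (1 : ℝ) else -1) = -(if x = 0 then 1 else -1) := by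
  have h : x + 1 = 0 ↔ x ≠ 0 := by revert x; decide
  by_cases hx : x = 0 <;> simp [h, hx]

theorem sum_sign_dotProduct (w : m → ZMod 2) :
    ∑ u : m → ZMod 2, (if u ⬝ᵥ w = 0 then (1 : ℝ) else -1) =
      if w = 0 then 2 ^ Fintype.card m else 0 := by
  split_ifs with hw
  · simp [hw]
  obtain ⟨j, hj⟩ : ∃ j, w j ≠ 0 := by simpa [funext_iff] using hw
  have hwj : w j = 1 := (show ∀ x : ZMod 2, x ≠ 0 → x = 1 by decide) _ hj
  -- translating `u` by the basis vector `e_j` flips every sign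
  have hflip := Equiv.sum_comp (Equiv.addRight (Pi.single j 1))
    fun u : m → ZMod 2 => if u ⬝ᵥ w = 0 then (1 : ℝ) else -1
  simp only [Equiv.coe_addRight, add_dotProduct, single_dotProduct, hwj, one_mul,
    ite_add_one_eq_zero_neg, sum_neg_distrib] at hflip
  linarith

theorem sum_sum_sign_mulVec (M : Matrix m n (ZMod 2)) :
    ∑ u : m → ZMod 2, ∑ v : n → ZMod 2, (if u ⬝ᵥ M *ᵥ v = 0 then (1 : ℝ) else -1) =
      2 ^ Fintype.card m * 2 ^ (Fintype.card n - M.rank) := by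
  rw [sum_comm]
  simp_rw [sum_sign_dotProduct, sum_ite, sum_const_zero, add_zero, sum_const, nsmul_eq_mul,
    card_filter_mulVec_eq_zero, ZMod.card]
  push_cast
  ring

theorem abs_sum_sum_sign_mulVec_div (M : Matrix m n (ZMod 2)) :
    |(∑ u : m → ZMod 2, ∑ v : n → ZMod 2, (if u ⬝ᵥ M *ᵥ v = 0 then (1 : ℝ) else -1)) /
      (2 ^ Fintype.card m * 2 ^ Fintype.card n)| = ((2 : ℝ) ^ M.rank)⁻¹ := by
  rw [sum_sum_sign_mulVec, mul_div_mul_left _ _ (by positivity), abs_of_nonneg (by positivity),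
    div_eq_iff (by positivity), inv_mul_eq_div, eq_div_iff (by positivity), ← pow_add,
    Nat.sub_add_cancel M.rank_le_card_width]

end SignSums

theorem sum_range_pow_min_add_two {R : Type*} [CommSemiring R] (q : R) (n : ℕ) :
    ∑ r ∈ range (n + 3), q ^ min r (n + 2 - r) =
      q * ∑ r ∈ range (n + 1), q ^ min r (n - r) + 2 := by
  rw [sum_range_succ', sum_range_succ, mul_sum]
  have hmid : ∀ r ∈ range (n + 1),
      q ^ min (r + 1) (n + 2 - (r + 1)) = q * q ^ min r (n - r) := fun r hr => by
    rw [← pow_succ']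
    have := mem_range.1 hr
    congr 1
    omega
  rw [sum_congr rfl hmid]
  simp only [tsub_self, zero_le, inf_of_le_right, pow_zero, tsub_zero, inf_of_le_left]
  ring

theorem sum_range_pow_min_add_le {s : ℝ} (hs : 2 ≤ s) (n : ℕ) :
    ∑ r ∈ range (n + 1), (s ^ 2) ^ min r (n - r) + 2 / (s ^ 2 - 1) ≤ 2 * s ^ n := by
  have hs2 : 3 ≤ s ^ 2 - 1 := by nlinarith
  have hc : 2 / (s ^ 2 - 1) ≤ 1 := by rw [div_le_one (by linarith)]; linarith
  induction n using Nat.twoStepInduction with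
  | zero => simp; linarith
  | one => simp [sum_range_succ]; linarith
  | more n ih _ =>
    -- `2 / (s² - 1)` is the fixed point of `x ↦ 2 + s² x`, so the recursion becomes a scaling
    have hfix : 2 + 2 / (s ^ 2 - 1) = s ^ 2 * (2 / (s ^ 2 - 1)) := by field_simp; ring
    calc _ = s ^ 2 * (∑ r ∈ range (n + 1), (s ^ 2) ^ min r (n - r) + 2 / (s ^ 2 - 1)) := by
          rw [sum_range_pow_min_add_two, add_assoc, hfix]; ring
      _ ≤ s ^ 2 * (2 * s ^ n) := by gcongr
      _ = 2 * s ^ (n + 2) := by ring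

theorem sum_range_pow_mul_min_le {q : ℝ} (hq : 2 ≤ q) (m : ℕ) :
    ∑ r ∈ range (m + 1), q ^ (m * min r (m - r)) ≤ 2 * √q ^ (m * m) := by
  have hsq : 1 ≤ √q := Real.one_le_sqrt.2 (by linarith)
  rcases Nat.lt_or_ge m 2 with hm | hm
  · interval_cases m
    · simp
    · simp [sum_range_succ]; linarith
  have hsq2 : (√q ^ m) ^ 2 = q ^ m := by
    rw [← pow_mul, mul_comm, pow_mul, Real.sq_sqrt (by linarith)]
  have hs : 2 ≤ √q ^ m := calc
    (2 : ℝ) ≤ √q ^ 2 := by rwa [Real.sq_sqrt (by linarith)]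
    _ ≤ √q ^ m := pow_le_pow_right₀ hsq hm
  have key := sum_range_pow_min_add_le hs m
  have hc : 0 ≤ 2 / ((√q ^ m) ^ 2 - 1) := div_nonneg zero_le_two (by nlinarith)
  simp only [hsq2, ← pow_mul] at key hc
  linarith

theorem Matrix.card_filter_rank_eq_le_pow_mul_min {K : Type*} [Field K] [Fintype K]
    [DecidableEq K] (m r : ℕ) :
    #{M : Matrix (Fin m) (Fin m) K | M.rank = r} ≤ Fintype.card K ^ (m * min (2 * r) m) := by
  rcases min_cases (2 * r) m with ⟨h, -⟩ | ⟨h, -⟩ <;> rw [h]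
  · refine (card_filter_rank_eq_le r).trans_eq ?_
    rw [Fintype.card_fin]
    ring_nf
  · refine (card_filter_le _ _).trans_eq ?_
    rw [card_univ, card_eq, Fintype.card_fin]

theorem sum_inv_pow_rank_pow_le {K : Type*} [Field K] [Fintype K] [DecidableEq K] (m : ℕ) :
    ∑ M : Matrix (Fin m) (Fin m) K, ((Fintype.card K : ℝ) ^ M.rank)⁻¹ ^ m ≤
      2 * √(Fintype.card K) ^ (m * m) := by
  set q := Fintype.card K
  rw [← sum_fiberwise_of_maps_to (g := Matrix.rank) (t := range (m + 1))
    fun M _ => mem_range.2 (Nat.lt_succ_of_le (rank_le_width M))]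
  refine (sum_le_sum fun r hr => ?_).trans
    (sum_range_pow_mul_min_le (by exact_mod_cast (Fintype.one_lt_card : 1 < q)) m)
  have hrm : r ≤ m := Nat.lt_succ_iff.1 (mem_range.1 hr)
  rw [sum_congr rfl fun M hM => by rw [(mem_filter.1 hM).2], sum_const, nsmul_eq_mul]
  have hq : (0 : ℝ) < q := by exact_mod_cast Fintype.card_pos
  rw [inv_pow, ← pow_mul, mul_inv_le_iff₀ (by positivity), ← pow_add]
  have hexp : m * min (2 * r) m = m * min r (m - r) + r * m := by
    rw [show min (2 * r) m = min r (m - r) + r by omega]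
    ring
  exact_mod_cast hexp ▸ card_filter_rank_eq_le_pow_mul_min m r

theorem rpow_two_div_sqrt_two_pow_le {m k : ℕ} (hk : 1 ≤ k) (hkm : k ≤ m) :
    (2 / √2 ^ (m * m)) ^ ((k : ℝ) / m) ≤ 2 * 2 ^ (-(9 * (k : ℝ) * m) / 20) := by
  have hm : (0 : ℝ) < m := by exact_mod_cast (by omega : 0 < m)
  have hkm' : (k : ℝ) ≤ m := by exact_mod_cast hkm
  have hk' : (0 : ℝ) ≤ k := by positivity
  have h2 : 2 / √2 ^ (m * m) = (2 : ℝ) ^ (1 - (m : ℝ) ^ 2 / 2) := by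
    rw [Real.sqrt_eq_rpow, ← Real.rpow_natCast, ← Real.rpow_mul zero_le_two,
      Real.rpow_sub two_pos, Real.rpow_one]
    push_cast; ring_nf
  have hexp : (1 - (m : ℝ) ^ 2 / 2) * (k / m) ≤ 1 + -(9 * (k : ℝ) * m) / 20 := by
    have : (k : ℝ) / m ≤ 1 := (div_le_one hm).2 hkm'
    rw [show (1 - (m : ℝ) ^ 2 / 2) * (k / m) = k / m - k * m / 2 by field_simp]
    nlinarith [mul_nonneg hk' hm.le]
  rw [h2, ← Real.rpow_mul zero_le_two]
  calc _ ≤ (2 : ℝ) ^ (1 + -(9 * (k : ℝ) * m) / 20) :=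
        Real.rpow_le_rpow_of_exponent_le one_le_two hexp
    _ = _ := by rw [Real.rpow_add two_pos, Real.rpow_one]

open Matrix in
/-- For uniformly random `M ∈ F_2^{m×m}` and `1 ≤ k ≤ m` (`m = √n`):
`E_M[ |E_{u,v}[(-1)^{uᵀMv}]|^k ] ≤ 2 · 2^{-9km/20}`. -/
theorem stmt_15 (m k : ℕ) (hk1 : 1 ≤ k) (hkm : k ≤ m) :
    (∑ M : Matrix (Fin m) (Fin m) (ZMod 2),
        |(∑ u : Fin m → ZMod 2, ∑ v : Fin m → ZMod 2,
            (if u ⬝ᵥ M.mulVec v = 0 then (1 : ℝ) else -1)) /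
          ((2 : ℝ) ^ m * (2 : ℝ) ^ m)| ^ k) / (2 : ℝ) ^ (m * m) ≤
      2 * (2 : ℝ) ^ (-(9 * (k : ℝ) * m) / 20) := by
  have hbias := abs_sum_sum_sign_mulVec_div (m := Fin m) (n := Fin m)
  simp only [Fintype.card_fin] at hbias
  simp only [hbias]
  set N : ℝ := 2 ^ (m * m)
  set z : Matrix (Fin m) (Fin m) (ZMod 2) → ℝ := fun M => ((2 : ℝ) ^ M.rank)⁻¹
  have hp : 1 ≤ (m : ℝ) / k := by
    rw [one_le_div (by positivity)]; exact_mod_cast hkm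
  have jensen := Real.arith_mean_le_rpow_mean univ (fun _ => 1 / N) (fun M => z M ^ k)
    (fun _ _ => by positivity) (by simp [N, card_univ, Matrix.card_eq]) (fun _ _ => by positivity) hp
  have hmoment := sum_inv_pow_rank_pow_le (K := ZMod 2) m
  simp only [ZMod.card, Nat.cast_ofNat] at hmoment
  have hzk : ∀ M, (z M ^ k) ^ ((m : ℝ) / k) = z M ^ m := fun M => by
    rw [← Real.rpow_natCast, ← Real.rpow_mul (by positivity), mul_div_cancel₀ _ (by positivity),
      Real.rpow_natCast]
  have hN : N = √2 ^ (m * m) * √2 ^ (m * m) := by rw [← mul_pow, Real.mul_self_sqrt zero_le_two]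
  calc _ = ∑ M, 1 / N * z M ^ k := by rw [sum_div]; simp [z, div_eq_inv_mul]
    _ ≤ (∑ M, 1 / N * (z M ^ k) ^ ((m : ℝ) / k)) ^ (1 / ((m : ℝ) / k)) := jensen
    _ = ((∑ M, z M ^ m) / N) ^ ((k : ℝ) / m) := by
      simp only [hzk, one_div_div, one_div_mul_eq_div, sum_div]
    _ ≤ (2 * √2 ^ (m * m) / N) ^ ((k : ℝ) / m) := by gcongr
    _ = (2 / √2 ^ (m * m)) ^ ((k : ℝ) / m) := by rw [hN, mul_div_mul_right _ _ (by positivity)]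
    _ ≤ _ := rpow_two_div_sqrt_two_pow_le hk1 hkm
end
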